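/- Let f, g be commuting circle homeomorphisms simultaneously topologically conjugated by h to rotations R_θ and R_β respectively, with θ, β irrational. Fix denominators q of θ and q̃ of β, set θ* = ‖qθ‖, β* = ‖q̃β‖ and L = ⌊β*/θ*⌋ ≥ 1. Define M = max_x d(f^{q}(x),x), m = min_x d(f^{q}(x),x), M̃ = max_x d(g^{q̃}(x),x), m̃ = min_x d(g^{q̃}(x),x). Then M̃ ≤ (1+L)·M and m̃ ≥ L·m; hence M̃/m̃ ≤ (1 + 1/L)·(M/m). -/

import Mathlib

/-- Distance from a real number to the nearest integer. -/
noncomputable def distNearestInt (x : ℝ) : ℝ := |x - round x|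

/-!
Lift `h⁻¹` to a monotone degree-one map `F : ℝ → ℝ` (reflecting it if `h` reverses orientation).
The displacement of `f^q` at `h⁻¹ x` is then the distance to `ℤ` of `F (x + qθ) - F x`, and up to an
integer translation and a change of base point this is `F (x + θ*) - F x`; likewise for `g^q̃` and
`β*`. Since `L θ* ≤ β* < (L + 1) θ*`, the segment `[x, x + β*]` contains `L` consecutive steps of
length `θ*`, and so does its complement `[x + β*, x + 1]`; this gives `m̃ ≥ L m`. It is also covered
by `L + 1` such steps, which gives `M̃ ≤ (L + 1) M`.
-/

open Set Function

local notation "𝕋" => AddCircle (1 : ℝ)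

lemma norm_coe_eq_distNearestInt (x : ℝ) : ‖(x : 𝕋)‖ = distNearestInt x :=
  UnitAddCircle.norm_eq

lemma dist_coe_eq_distNearestInt (x y : ℝ) :
    dist (x : 𝕋) (y : 𝕋) = distNearestInt (x - y) := by
  rw [dist_eq_norm, ← AddCircle.coe_sub, norm_coe_eq_distNearestInt]

lemma coe_intCast_eq_zero (n : ℤ) : ((n : ℝ) : 𝕋) = 0 :=
  (AddCircle.coe_eq_zero_iff (1 : ℝ)).2 ⟨n, by simp⟩

lemma exists_int_of_coe_eq_coe {x y : ℝ} (h : (x : 𝕋) = y) : ∃ n : ℤ, x = y + n := by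
  obtain ⟨n, hn⟩ := (AddCircle.coe_eq_zero_iff (1 : ℝ) (x := x - y)).1
    (by rw [AddCircle.coe_sub, h, sub_self])
  exact ⟨n, by rw [zsmul_one] at hn; linarith⟩

lemma distNearestInt_nonneg (x : ℝ) : 0 ≤ distNearestInt x := abs_nonneg _

lemma distNearestInt_le_half (x : ℝ) : distNearestInt x ≤ 1 / 2 := abs_sub_round x

lemma distNearestInt_le_abs_sub_intCast (x : ℝ) (n : ℤ) : distNearestInt x ≤ |x - n| :=
  round_le x n

lemma distNearestInt_add_intCast (x : ℝ) (n : ℤ) :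
    distNearestInt (x + n) = distNearestInt x := by
  rw [← norm_coe_eq_distNearestInt, ← norm_coe_eq_distNearestInt, AddCircle.coe_add,
    coe_intCast_eq_zero, add_zero]

lemma distNearestInt_neg (x : ℝ) : distNearestInt (-x) = distNearestInt x := by
  rw [← norm_coe_eq_distNearestInt, ← norm_coe_eq_distNearestInt, AddCircle.coe_neg, norm_neg]

lemma min_le_distNearestInt (x : ℝ) : min x (1 - x) ≤ distNearestInt x := by
  unfold distNearestInt
  rcases le_or_gt (round x) 0 with h | h
  · have : (round x : ℝ) ≤ 0 := by exact_mod_cast h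
    exact (min_le_left _ _).trans ((by linarith : x ≤ x - round x).trans (le_abs_self _))
  · have : (1 : ℝ) ≤ round x := by exact_mod_cast h
    exact (min_le_right _ _).trans ((by linarith : 1 - x ≤ -(x - round x)).trans (neg_le_abs _))

/-- Either some `s i` exceeds `1/2`, and then `1 - y ≤ 1 - s i`, or every `s i` is its own
distance to `ℤ`. -/
lemma distNearestInt_le_sum {ι : Type*} (t : Finset ι) (s : ι → ℝ) {y : ℝ} (hy₀ : 0 ≤ y)
    (hy₁ : y ≤ 1) (hsy : ∀ i ∈ t, s i ≤ y) (hsum : y ≤ ∑ i ∈ t, s i) :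
    distNearestInt y ≤ ∑ i ∈ t, distNearestInt (s i) := by
  by_cases hbig : ∃ i ∈ t, 1 / 2 < s i
  · obtain ⟨i, hi, hsi⟩ := hbig
    calc distNearestInt y ≤ |y - (1 : ℤ)| := distNearestInt_le_abs_sub_intCast y 1
      _ ≤ min (s i) (1 - s i) := by
        rw [min_eq_right (by linarith), Int.cast_one, abs_of_nonpos (by linarith)]
        linarith [hsy i hi]
      _ ≤ distNearestInt (s i) := min_le_distNearestInt _
      _ ≤ ∑ i ∈ t, distNearestInt (s i) :=
        Finset.single_le_sum (fun j _ => distNearestInt_nonneg (s j)) hi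
  · push Not at hbig
    calc distNearestInt y ≤ |y - (0 : ℤ)| := distNearestInt_le_abs_sub_intCast y 0
      _ ≤ ∑ i ∈ t, s i := by rwa [Int.cast_zero, sub_zero, abs_of_nonneg hy₀]
      _ ≤ ∑ i ∈ t, distNearestInt (s i) := Finset.sum_le_sum fun i hi =>
        (min_eq_left (by linarith [hbig i hi])).symm.le.trans (min_le_distNearestInt _)

section Lift

variable {Φ Ψ : 𝕋 → 𝕋} {G H : ℝ → ℝ}

lemma exists_continuous_lift (hΦ : Continuous Φ) :
    ∃ H : ℝ → ℝ, Continuous H ∧ ∀ x : ℝ, (H x : 𝕋) = Φ x := by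
  obtain ⟨y₀, hy₀⟩ := QuotientAddGroup.mk_surjective (Φ ((0 : ℝ) : 𝕋))
  obtain ⟨H, ⟨-, hH⟩, -⟩ := (AddCircle.isCoveringMap_coe (1 : ℝ)).existsUnique_continuousMap_lifts
    (ContinuousMap.comp ⟨Φ, hΦ⟩ ⟨QuotientAddGroup.mk, AddCircle.continuous_mk' 1⟩) 0 y₀ hy₀
  exact ⟨H, H.continuous, congrFun hH⟩

lemma eq_of_continuous_of_coe_eq (hG : Continuous G) (hH : Continuous H)
    (hGH : ∀ x, (G x : 𝕋) = H x) {x₀ : ℝ} (h₀ : G x₀ = H x₀) : G = H :=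
  (AddCircle.isCoveringMap_coe (1 : ℝ)).eq_of_comp_eq hG hH (funext hGH) x₀ h₀

lemma exists_int_map_add_one_eq (hHc : Continuous H) (hH : ∀ x : ℝ, (H x : 𝕋) = Φ x) :
    ∃ e : ℤ, ∀ x, H (x + 1) = H x + e := by
  obtain ⟨e, he⟩ := exists_int_of_coe_eq_coe (x := H (0 + 1)) (y := H 0) (by
    rw [hH, hH, AddCircle.coe_add, AddCircle.coe_period, add_zero])
  refine ⟨e, congrFun (eq_of_continuous_of_coe_eq (x₀ := 0)
    (hHc.comp (continuous_add_const 1)) (hHc.add continuous_const) (fun x => ?_) he)⟩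
  simp only [AddCircle.coe_add, hH, AddCircle.coe_period, add_zero, coe_intCast_eq_zero]

lemma exists_int_comp_eq_add (hGc : Continuous G) (hHc : Continuous H)
    (hG : ∀ y : ℝ, (G y : 𝕋) = Ψ y) (hH : ∀ x : ℝ, (H x : 𝕋) = Φ x) (hΨΦ : ∀ z, Ψ (Φ z) = z) :
    ∃ k : ℤ, ∀ x, G (H x) = x + k := by
  obtain ⟨k, hk⟩ := exists_int_of_coe_eq_coe (x := G (H 0)) (y := 0) (by rw [hG, hH, hΨΦ])
  refine ⟨k, congrFun (eq_of_continuous_of_coe_eq (x₀ := 0)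
    (hGc.comp hHc) (continuous_id.add continuous_const) (fun x => ?_) hk)⟩
  simp only [hG, hH, hΨΦ, AddCircle.coe_add, coe_intCast_eq_zero, add_zero]

lemma map_add_intCast_of_map_add_one {e : ℤ} (hH : ∀ x, H (x + 1) = H x + e) (x : ℝ) (n : ℤ) :
    H (x + n) = H x + n * e := by
  have hper : Periodic (fun x => H x - e * x) 1 := fun x => by simp only [hH]; ring
  have := hper.int_mul n x
  simp only [mul_one] at this
  linarith

lemma exists_circleDeg1Lift_dist_eq (Φ : 𝕋 ≃ₜ 𝕋) :
    ∃ F : CircleDeg1Lift, ∀ x y : ℝ, dist (Φ x) (Φ y) = dist (F x : 𝕋) (F y) := by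
  obtain ⟨H, hHc, hH⟩ := exists_continuous_lift Φ.continuous
  obtain ⟨G, hGc, hG⟩ := exists_continuous_lift Φ.symm.continuous
  obtain ⟨e, he⟩ := exists_int_map_add_one_eq hHc hH
  obtain ⟨e', he'⟩ := exists_int_map_add_one_eq hGc hG
  obtain ⟨k, hk⟩ := exists_int_comp_eq_add hGc hHc hG hH Φ.symm_apply_apply
  have hinj : Injective H := fun x y hxy => by simpa [hk] using congrArg G hxy
  have he_unit : e = 1 ∨ e = -1 := by
    -- `G (H 1)` is `1 + k`, and also `G (H 0 + e) = k + e e'`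
    have := hk (0 + 1)
    rw [he, map_add_intCast_of_map_add_one he', hk] at this
    exact Int.eq_one_or_neg_one_of_mul_eq_one (v := e') <|
      by exact_mod_cast (by linarith : (e : ℝ) * e' = 1)
  have h01 : (0 : ℝ) < 0 + 1 := by norm_num
  rcases hHc.strictMono_of_inj hinj with hmono | hanti
  · have he₁ : e = 1 := by
      have := hmono h01
      rw [he] at this
      have : (0 : ℤ) < e := by exact_mod_cast (by linarith : (0 : ℝ) < e)
      omega
    exact ⟨⟨⟨H, hmono.monotone⟩, fun x => by simp [he, he₁]⟩, fun x y => by rw [← hH, ← hH]; rfl⟩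
  -- `Φ` reverses orientation: reflect the lift, which does not change circle distances.
  · have he₁ : e = -1 := by
      have := hanti h01
      rw [he] at this
      have : e < (0 : ℤ) := by exact_mod_cast (by linarith : (e : ℝ) < 0)
      omega
    refine ⟨⟨⟨fun x => -H x, hanti.antitone.neg⟩, fun x => ?_⟩, fun x y => ?_⟩
    · simp [he, he₁]; ring
    · show _ = dist ((-H x : ℝ) : 𝕋) ((-H y : ℝ) : 𝕋)
      rw [← hH, ← hH, AddCircle.coe_neg, AddCircle.coe_neg, dist_neg_neg]

end Lift

lemma sum_range_sub_add_mul (g : ℝ → ℝ) (x a : ℝ) (k : ℕ) :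
    ∑ j ∈ Finset.range k, (g (x + j * a + a) - g (x + j * a)) = g (x + k * a) - g x := by
  simpa [add_one_mul, add_assoc] using Finset.sum_range_sub (fun j : ℕ => g (x + j * a)) k

namespace CircleDeg1Lift

variable (F : CircleDeg1Lift)

noncomputable def displacement (c x : ℝ) : ℝ := distNearestInt (F (x + c) - F x)

lemma displacement_nonneg (c x : ℝ) : 0 ≤ F.displacement c x := distNearestInt_nonneg _

lemma bddAbove_range_displacement (c : ℝ) : BddAbove (range (F.displacement c)) :=
  ⟨1 / 2, by rintro _ ⟨x, rfl⟩; exact distNearestInt_le_half _⟩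

lemma bddBelow_range_displacement (c : ℝ) : BddBelow (range (F.displacement c)) :=
  ⟨0, by rintro _ ⟨x, rfl⟩; exact F.displacement_nonneg c x⟩

lemma displacement_add_intCast (c : ℝ) (n : ℤ) :
    F.displacement (c + n) = F.displacement c := by
  funext x
  unfold displacement
  rw [← add_assoc, map_add_int, add_sub_right_comm, distNearestInt_add_intCast]

lemma displacement_neg (c : ℝ) : F.displacement (-c) = F.displacement c ∘ (· - c) := by
  funext x
  unfold displacement
  rw [comp_apply, sub_add_cancel, ← sub_eq_add_neg, ← distNearestInt_neg, neg_sub]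

lemma range_displacement_distNearestInt (c : ℝ) :
    range (F.displacement (distNearestInt c)) = range (F.displacement c) := by
  have hc : F.displacement c = F.displacement (c - round c) := by
    rw [← F.displacement_add_intCast (c - round c) (round c), sub_add_cancel]
  rw [hc, distNearestInt]
  rcases abs_choice (c - round c) with h | h
  · rw [h]
  · rw [h, displacement_neg]
    exact (Equiv.subRight _).surjective.range_comp _

lemma map_add_sub_nonneg {c : ℝ} (hc : 0 ≤ c) (x : ℝ) : 0 ≤ F (x + c) - F x :=
  sub_nonneg.2 (F.monotone (le_add_of_nonneg_right hc))

lemma map_add_sub_le_one {c : ℝ} (hc : c ≤ 1) (x : ℝ) : F (x + c) - F x ≤ 1 := by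
  have := F.monotone (by linarith : x + c ≤ x + 1)
  rw [map_add_one] at this
  linarith

variable {F} {a b m M : ℝ} {L : ℕ}

lemma natCast_mul_le_map_add_mul_sub (ha : 0 ≤ a) (hm : ∀ x, m ≤ F.displacement a x) (x : ℝ)
    (k : ℕ) :
    k * m ≤ F (x + k * a) - F x := by
  calc (k : ℝ) * m = (Finset.range k).card • m := by simp
    _ ≤ ∑ j ∈ Finset.range k, (F (x + j * a + a) - F (x + j * a)) :=
        Finset.card_nsmul_le_sum _ _ _ fun j _ => (hm (x + j * a)).trans <|
          (distNearestInt_le_abs_sub_intCast _ 0).trans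
            (by rw [Int.cast_zero, sub_zero, abs_of_nonneg (F.map_add_sub_nonneg ha _)])
    _ = F (x + k * a) - F x := sum_range_sub_add_mul _ _ _ _

lemma mul_le_displacement (ha : 0 ≤ a) (hLa : L * a ≤ b) (hb : 2 * b ≤ 1)
    (hm : ∀ x, m ≤ F.displacement a x) (u : ℝ) : L * m ≤ F.displacement b u := by
  have hLa₀ : 0 ≤ L * a := by positivity
  refine le_trans (le_min ?_ ?_) (min_le_distNearestInt _)
  · calc L * m ≤ F (u + L * a) - F u := natCast_mul_le_map_add_mul_sub ha hm u L
      _ ≤ F (u + b) - F u := sub_le_sub_right (F.monotone (by linarith)) _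
  · calc L * m ≤ F (u + b + L * a) - F (u + b) := natCast_mul_le_map_add_mul_sub ha hm (u + b) L
      _ ≤ F (u + 1) - F (u + b) := sub_le_sub_right (F.monotone (by linarith)) _
      _ = 1 - (F (u + b) - F u) := by rw [map_add_one]; ring

/-- The segment `[u, u + b]` is covered by the `L + 1` windows `[w j, w j + a]`, where
`w j = u + j a` for `j < L` and the last window ends at `u + b`. -/
lemma displacement_le_mul (hL : 1 ≤ L) (hLa : L * a ≤ b) (hLb : b < (L + 1) * a) (hb₁ : b ≤ 1)
    (hM : ∀ x, F.displacement a x ≤ M) (u : ℝ) : F.displacement b u ≤ (L + 1) * M := by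
  have hL' : (1 : ℝ) ≤ L := by exact_mod_cast hL
  have ha : 0 < a := by nlinarith
  have hb : 0 ≤ b := (by positivity : (0 : ℝ) ≤ L * a).trans hLa
  set w : ℕ → ℝ := fun j => u + min (j * a) (b - a) with hw
  have hw_mem : ∀ j, u ≤ w j ∧ w j + a ≤ u + b := fun j =>
    ⟨by simp only [hw]; exact le_add_of_nonneg_right (le_min (by positivity) (by nlinarith)),
     by simp only [hw]; linarith [min_le_right (j * a) (b - a)]⟩
  have hw_lt : ∀ j < L, w j = u + j * a := fun j hj => by
    have : (j : ℝ) + 1 ≤ L := by exact_mod_cast hj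
    simp only [hw]; rw [min_eq_left (by nlinarith)]
  have hw_last : w L = u + b - a := by
    simp only [hw]; rw [min_eq_right (by linarith)]; ring
  calc F.displacement b u
      ≤ ∑ j ∈ Finset.range (L + 1), distNearestInt (F (w j + a) - F (w j)) := by
        refine distNearestInt_le_sum _ _ (F.map_add_sub_nonneg hb u)
          (F.map_add_sub_le_one hb₁ u) (fun j _ => ?_) ?_
        · exact sub_le_sub (F.monotone (hw_mem j).2) (F.monotone (hw_mem j).1)
        · rw [Finset.sum_range_succ, Finset.sum_congr rfl fun j hj => by
            rw [hw_lt j (Finset.mem_range.1 hj)], sum_range_sub_add_mul, hw_last, sub_add_cancel]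
          linarith [F.monotone (by linarith : u + b - a ≤ u + L * a)]
    _ ≤ (L + 1) * M := by
        refine (Finset.sum_le_card_nsmul _ _ M fun j _ => hM (w j)).trans ?_
        simp

lemma csSup_range_displacement_le (hL : 1 ≤ L) (hLa : L * a ≤ b) (hLb : b < (L + 1) * a)
    (hb : b ≤ 1) :
    sSup (range (F.displacement b)) ≤ (1 + L) * sSup (range (F.displacement a)) := by
  refine csSup_le (range_nonempty _) ?_
  rintro _ ⟨u, rfl⟩
  rw [add_comm]
  exact displacement_le_mul hL hLa hLb hb
    (fun x => le_csSup (F.bddAbove_range_displacement a) ⟨x, rfl⟩) u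

lemma mul_csInf_range_displacement_le (ha : 0 ≤ a) (hLa : L * a ≤ b) (hb : 2 * b ≤ 1) :
    L * sInf (range (F.displacement a)) ≤ sInf (range (F.displacement b)) := by
  refine le_csInf (range_nonempty _) ?_
  rintro _ ⟨u, rfl⟩
  exact mul_le_displacement ha hLa hb
    (fun x => csInf_le (F.bddBelow_range_displacement a) ⟨x, rfl⟩) u

end CircleDeg1Lift

section Conjugacy

variable {Φ : 𝕋 ≃ₜ 𝕋} {f : 𝕋 → 𝕋} {θ : ℝ}

lemma semiconj_symm_add {h : 𝕋 ≃ₜ 𝕋} {α : 𝕋} (hconj : ∀ x, h (f (h.symm x)) = x + α) :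
    Semiconj h.symm (· + α) f := fun x => by
  simpa using (congrArg h.symm (hconj x)).symm

lemma iterate_apply_of_semiconj_add (hf : Semiconj Φ (· + (θ : 𝕋)) f) (n : ℕ) (z : 𝕋) :
    f^[n] (Φ z) = Φ (z + ((n * θ : ℝ) : 𝕋)) := by
  rw [← (hf.iterate_right n) z, add_right_iterate, ← nsmul_eq_mul, AddCircle.coe_nsmul]

lemma dist_iterate_pos_of_semiconj_add (hf : Semiconj Φ (· + (θ : 𝕋)) f) {n : ℕ}
    (hn : distNearestInt (n * θ) ≠ 0) (z : 𝕋) : 0 < dist (f^[n] z) z := by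
  obtain ⟨w, rfl⟩ := Φ.surjective z
  rw [dist_pos, iterate_apply_of_semiconj_add hf, Ne, Φ.injective.eq_iff, add_eq_left]
  exact fun h => hn (by rw [← norm_coe_eq_distNearestInt, h, norm_zero])

lemma range_dist_iterate_eq_range_displacement {F : CircleDeg1Lift}
    (hF : ∀ x y : ℝ, dist (Φ x) (Φ y) = dist (F x : 𝕋) (F y))
    (hf : Semiconj Φ (· + (θ : 𝕋)) f) (n : ℕ) :
    range (fun z => dist (f^[n] z) z) = range (F.displacement (distNearestInt (n * θ))) := by
  rw [F.range_displacement_distNearestInt,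
    ← (Φ.surjective.comp QuotientAddGroup.mk_surjective).range_comp]
  congr 1
  funext x
  rw [comp_apply, comp_apply, iterate_apply_of_semiconj_add hf, ← AddCircle.coe_add, hF,
    dist_coe_eq_distNearestInt]
  rfl

end Conjugacy

lemma pos_and_natFloor_div_mul_le_and_lt {a b : ℝ} (ha : 0 ≤ a) (hb : 0 ≤ b)
    (hL : 1 ≤ ⌊b / a⌋₊) : 0 < a ∧ ⌊b / a⌋₊ * a ≤ b ∧ b < (⌊b / a⌋₊ + 1) * a := by
  have ha' : 0 < a := ha.lt_of_ne fun h₀ => by simp [← h₀] at hL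
  exact ⟨ha', (le_div_iff₀ ha').1 (Nat.floor_le (div_nonneg hb ha)),
    (div_lt_iff₀ ha').1 (Nat.lt_floor_add_one _)⟩

lemma ciInf_pos_of_continuous {X : Type*} [TopologicalSpace X] [CompactSpace X] [Nonempty X]
    {φ : X → ℝ} (hφ : Continuous φ) (hpos : ∀ x, 0 < φ x) : 0 < ⨅ x, φ x := by
  obtain ⟨x₀, -, hx₀⟩ := isCompact_univ.exists_isMinOn univ_nonempty hφ.continuousOn
  exact (hpos x₀).trans_le (le_ciInf fun x => hx₀ (mem_univ x))

lemma div_le_one_add_inv_mul_div {M m M' m' L : ℝ} (hL : 0 < L) (hm : 0 < m) (hM : 0 ≤ M)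
    (hM' : M' ≤ (1 + L) * M) (hm' : L * m ≤ m') : M' / m' ≤ (1 + 1 / L) * (M / m) :=
  calc M' / m' ≤ (1 + L) * M / (L * m) := div_le_div₀ (by positivity) hM' (by positivity) hm'
    _ = (1 + 1 / L) * (M / m) := by field_simp; ring

theorem displacement_transfer_general
    (θ β : ℝ)
    (f g h : AddCircle (1 : ℝ) ≃ₜ AddCircle (1 : ℝ))
    (hconjf : ∀ x, h (f (h.symm x)) = x + (θ : AddCircle (1 : ℝ)))
    (hconjg : ∀ x, h (g (h.symm x)) = x + (β : AddCircle (1 : ℝ)))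
    (q qt : ℕ) (θs βs : ℝ)
    (hθs : θs = distNearestInt ((q : ℝ) * θ))
    (hβs : βs = distNearestInt ((qt : ℝ) * β))
    (L : ℕ) (hL : L = ⌊βs / θs⌋₊) (hL1 : 1 ≤ L)
    (M m Mt mt : ℝ)
    (hM : M = ⨆ x : AddCircle (1 : ℝ), dist ((⇑f)^[q] x) x)
    (hm : m = ⨅ x : AddCircle (1 : ℝ), dist ((⇑f)^[q] x) x)
    (hMt : Mt = ⨆ x : AddCircle (1 : ℝ), dist ((⇑g)^[qt] x) x)
    (hmt : mt = ⨅ x : AddCircle (1 : ℝ), dist ((⇑g)^[qt] x) x) :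
    Mt ≤ (1 + L) * M ∧ (L : ℝ) * m ≤ mt ∧ Mt / mt ≤ (1 + 1 / L) * (M / m) := by
  obtain ⟨F, hF⟩ := exists_circleDeg1Lift_dist_eq h.symm
  have hf := semiconj_symm_add hconjf
  have hg := semiconj_symm_add hconjg
  have hθs₀ : 0 ≤ θs := hθs ▸ distNearestInt_nonneg _
  have hβs_half : 2 * βs ≤ 1 := by linarith [hβs ▸ distNearestInt_le_half _]
  obtain ⟨hθs_pos, hLa, hLb⟩ := hL ▸
    pos_and_natFloor_div_mul_le_and_lt hθs₀ (hβs ▸ distNearestInt_nonneg _) (hL ▸ hL1)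
  have hm_pos : 0 < m := hm ▸ ciInf_pos_of_continuous ((f.continuous.iterate q).dist continuous_id)
    (dist_iterate_pos_of_semiconj_add hf (hθs ▸ hθs_pos.ne'))
  have hrf : range (fun z => dist (f^[q] z) z) = range (F.displacement θs) := by
    rw [hθs]; exact range_dist_iterate_eq_range_displacement hF hf q
  have hrg : range (fun z => dist (g^[qt] z) z) = range (F.displacement βs) := by
    rw [hβs]; exact range_dist_iterate_eq_range_displacement hF hg qt
  simp only [← sSup_range, ← sInf_range, hrf, hrg] at hM hm hMt hmt
  have hupper : Mt ≤ (1 + L) * M :=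
    hMt ▸ hM ▸ F.csSup_range_displacement_le hL1 hLa hLb (by linarith)
  have hlower : L * m ≤ mt := hmt ▸ hm ▸ F.mul_csInf_range_displacement_le hθs₀ hLa hβs_half
  have hM₀ : 0 ≤ M := hM ▸ Real.sSup_nonneg (by rintro _ ⟨x, rfl⟩; exact F.displacement_nonneg _ x)
  exact ⟨hupper, hlower, div_le_one_add_inv_mul_div (by positivity) hm_pos hM₀ hupper hlower⟩

/-- Lemma 8 of the paper: if commuting circle homeomorphisms `f`, `g` are simultaneously
conjugated by `h` to the rotations `R_θ`, `R_β`, with `θ* = ‖qθ‖`, `β* = ‖q̃β‖` and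
`L = ⌊β*/θ*⌋ ≥ 1`, then the extremal displacements satisfy
`M̃ ≤ (1+L)·M`, `m̃ ≥ L·m`, and `M̃/m̃ ≤ (1 + 1/L)·(M/m)`. -/
theorem displacement_transfer
    (θ β : ℝ) (hθ : Irrational θ) (hβ : Irrational β)
    (f g h : AddCircle (1 : ℝ) ≃ₜ AddCircle (1 : ℝ))
    (hcomm : ∀ x, f (g x) = g (f x))
    (hconjf : ∀ x, h (f (h.symm x)) = x + (θ : AddCircle (1 : ℝ)))
    (hconjg : ∀ x, h (g (h.symm x)) = x + (β : AddCircle (1 : ℝ)))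
    (q qt : ℕ) (θs βs : ℝ)
    (hθs : θs = distNearestInt ((q : ℝ) * θ))
    (hβs : βs = distNearestInt ((qt : ℝ) * β))
    (L : ℕ) (hL : L = ⌊βs / θs⌋₊) (hL1 : 1 ≤ L)
    (M m Mt mt : ℝ)
    (hM : M = ⨆ x : AddCircle (1 : ℝ), dist ((⇑f)^[q] x) x)
    (hm : m = ⨅ x : AddCircle (1 : ℝ), dist ((⇑f)^[q] x) x)
    (hMt : Mt = ⨆ x : AddCircle (1 : ℝ), dist ((⇑g)^[qt] x) x)
    (hmt : mt = ⨅ x : AddCircle (1 : ℝ), dist ((⇑g)^[qt] x) x) :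
    Mt ≤ (1 + L) * M ∧ (L : ℝ) * m ≤ mt ∧ Mt / mt ≤ (1 + 1 / L) * (M / m) :=
  displacement_transfer_general θ β f g h hconjf hconjg q qt θs βs hθs hβs L hL hL1 M m Mt mt hM hm
    hMt hmt
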